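/- Let v ∈ 𝒰(ℝ) be a threshold utility. For every Z ∈ 𝒳, the base risk measure ρ_{Z,v}(X) = inf{m ∈ ℝ : Z ≤_{v-SD} X + m} takes finite real values for all X ∈ 𝒳 and is a monetary risk measure (antitone and cash-additive). Moreover, every base risk measure under v (i.e., ρ_{Z,v} for every Z ∈ 𝒳) is convex if and only if v is concave. -/

import Mathlib

open MeasureTheory Filter Set

noncomputable section

namespace Paper

variable {Ω : Type*} [MeasurableSpace Ω]

/-- The probability measure `P` is atomless. -/
def Atomless (P : Measure Ω) : Prop :=
  ∀ s : Set Ω, MeasurableSet s → 0 < P s →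
    ∃ t : Set Ω, MeasurableSet t ∧ t ⊆ s ∧ 0 < P t ∧ P t < P s

/-- `𝒳`: the essentially bounded random variables. -/
def MemX (P : Measure Ω) (X : Ω → ℝ) : Prop :=
  Measurable X ∧ ∃ C : ℝ, ∀ᵐ ω ∂P, |X ω| ≤ C

/-- `𝒰(I)`: twice differentiable functions with everywhere positive first
derivative on `I`. -/
def IsUtility (I : Set ℝ) (u : ℝ → ℝ) : Prop :=
  (∀ x ∈ I, DifferentiableAt ℝ u x) ∧
  (∀ x ∈ I, DifferentiableAt ℝ (deriv u) x) ∧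
  (∀ x ∈ I, 0 < deriv u x)

/-- Arrow–Pratt coefficient of absolute risk aversion. -/
def RA (u : ℝ → ℝ) (x : ℝ) : ℝ := -deriv (deriv u) x / deriv u x

/-- `𝓛¹_v`: `I`-valued random variables `X` with `v(X)` integrable. -/
def MemL1 (P : Measure Ω) (I : Set ℝ) (v : ℝ → ℝ) (X : Ω → ℝ) : Prop :=
  Measurable X ∧ (∀ᵐ ω ∂P, X ω ∈ I) ∧ Integrable (fun ω => v (X ω)) P

/-- The `v`-SD order: `X ≤_{v-SD} Y`. -/
def vSD (P : Measure Ω) (I : Set ℝ) (v : ℝ → ℝ) (X Y : Ω → ℝ) : Prop :=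
  ∀ u : ℝ → ℝ, IsUtility I u → (∀ x ∈ I, RA v x ≤ RA u x) →
    Integrable (fun ω => u (X ω)) P → Integrable (fun ω => u (Y ω)) P →
    ∫ ω, u (X ω) ∂P ≤ ∫ ω, u (Y ω) ∂P

/-- Second-order stochastic dominance. -/
def SSD (P : Measure Ω) (X Y : Ω → ℝ) : Prop :=
  ∀ u : ℝ → ℝ, IsUtility Set.univ u → ConcaveOn ℝ Set.univ u →
    Integrable (fun ω => u (X ω)) P → Integrable (fun ω => u (Y ω)) P →
    ∫ ω, u (X ω) ∂P ≤ ∫ ω, u (Y ω) ∂P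

/-- Monetary risk measure: antitone and cash-additive on `𝒳`. -/
def IsRiskMeasure (P : Measure Ω) (ρ : (Ω → ℝ) → ℝ) : Prop :=
  (∀ X Y : Ω → ℝ, MemX P X → MemX P Y → (∀ᵐ ω ∂P, X ω ≤ Y ω) → ρ Y ≤ ρ X) ∧
  (∀ X : Ω → ℝ, MemX P X → ∀ c : ℝ, ρ (fun ω => X ω + c) = ρ X - c)

/-- Worst-case risk measure `ρ^w(X) = ess sup (-X)`. -/
def rhoW (P : Measure Ω) (X : Ω → ℝ) : ℝ :=
  sInf {m : ℝ | ∀ᵐ ω ∂P, -X ω ≤ m}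

/-- `v`-SD-consistency of `φ` on the domain `D`. -/
def VSDConsistent (P : Measure Ω) (I : Set ℝ) (v : ℝ → ℝ)
    (D : Set (Ω → ℝ)) (φ : (Ω → ℝ) → ℝ) : Prop :=
  ∀ X Y : Ω → ℝ, X ∈ D → Y ∈ D → MemL1 P I v X → MemL1 P I v Y →
    vSD P I v X Y → φ Y ≤ φ X

/-- `𝒞`: the a.s. strictly positive bounded random variables. -/
def MemC (P : Measure Ω) (X : Ω → ℝ) : Prop :=
  MemX P X ∧ ∀ᵐ ω ∂P, 0 < X ω

/-- `𝓔 = {e^Y : Y ∈ 𝒳}` (up to a.s. equality). -/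
def MemE (P : Measure Ω) (X : Ω → ℝ) : Prop :=
  ∃ Y : Ω → ℝ, MemX P Y ∧ ∀ᵐ ω ∂P, X ω = Real.exp (Y ω)

/-- Return risk measure. -/
def IsRRM (P : Measure Ω) (η : (Ω → ℝ) → ℝ) : Prop :=
  (∀ X : Ω → ℝ, MemC P X → 0 < η X) ∧
  (∀ X Y : Ω → ℝ, MemC P X → MemC P Y → (∀ᵐ ω ∂P, X ω ≤ Y ω) → η Y ≤ η X) ∧
  (∀ X : Ω → ℝ, MemC P X → ∀ t : ℝ, 0 < t → η (fun ω => t * X ω) = t⁻¹ * η X)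

/-- Loss-based return risk measure. -/
def IsLossRRM (P : Measure Ω) (κ : (Ω → ℝ) → ℝ) : Prop :=
  (∀ L : Ω → ℝ, MemC P L → 0 < κ L) ∧
  (∀ L L' : Ω → ℝ, MemC P L → MemC P L' → (∀ᵐ ω ∂P, L' ω ≤ L ω) → κ L' ≤ κ L) ∧
  (∀ L : Ω → ℝ, MemC P L → ∀ t : ℝ, 0 < t → κ (fun ω => t * L ω) = t * κ L)

/-- Base risk measure `ρ_{Z,v}`. -/
def baseRM (P : Measure Ω) (v : ℝ → ℝ) (Z X : Ω → ℝ) : ℝ :=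
  sInf {m : ℝ | vSD P Set.univ v Z (fun ω => X ω + m)}

/-- Lower quantile function. -/
def qf (P : Measure Ω) (X : Ω → ℝ) (r : ℝ) : ℝ :=
  sInf {x : ℝ | r ≤ (P {ω | X ω ≤ x}).toReal}

/-- Expected Shortfall at level `p`. -/
def ES (P : Measure Ω) (p : ℝ) (X : Ω → ℝ) : ℝ :=
  if p < 1 then -(1 / (1 - p)) * ∫ r in (0:ℝ)..(1 - p), qf P X r
  else rhoW P X

/-!
Write `S_X = {m | Z ≤_{v-SD} X + m}`, so that `ρ_{Z,v}(X) = inf S_X`. An a.s. inequality implies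
`v`-SD, and `v`-SD between constants is the usual order; comparing `Z` and `X + m` with constants
shows that `S_X` is nonempty and bounded below, and antitonicity and cash-additivity follow from
`S_X ⊆ S_Y` for `X ≤ Y` and `S_{X + c} = S_X - c`.

If `v` is concave, every `u ∈ 𝒰_v` is concave too (`R_u^A ≥ R_v^A ≥ 0`), and Jensen's inequality
gives `l • S_X + (1 - l) • S_Y ⊆ S_{l X + (1 - l) Y}`.

If `v` is not concave, then `v'' > 0` somewhere, hence `2 v(x₀) < v(x₀ - s) + v(x₀ + s)` for some
`s`. On an event `A` with `P A = 1/2` (it exists because `P` is atomless) let `Z` be `x₀ - s` and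
`X` be `x₀ + s`, and the other way round off `A`. Then `X` and `Z` have the same law, so
`ρ_{Z,v}(X) ≤ 0` and `ρ_{Z,v}(Z) ≤ 0`, while their average is the constant `x₀`, whose risk is
positive because `v(x₀) < E[v(Z)]`.
-/
open scoped ENNReal Topology Pointwise

namespace Atomless

variable {μ : Measure Ω}

lemma exists_subset_two_mul_le (hμ : Atomless μ) {s : Set Ω} (hs : MeasurableSet s)
    (hs0 : 0 < μ s) : ∃ t ⊆ s, MeasurableSet t ∧ 0 < μ t ∧ 2 * μ t ≤ μ s := by
  obtain ⟨t, ht, hts, ht0, hlt⟩ := hμ s hs hs0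
  have hsplit : μ t + μ (s \ t) = μ s := by
    rw [measure_add_sdiff ht.nullMeasurableSet, union_eq_right.mpr hts]
  rcases le_total (μ t) (μ (s \ t)) with hle | hle
  · exact ⟨t, hts, ht, ht0, by rw [two_mul, ← hsplit]; gcongr⟩
  · refine ⟨s \ t, sdiff_subset, hs.diff ht, pos_iff_ne_zero.mpr fun h0 => ?_, ?_⟩
    · rw [h0, add_zero] at hsplit
      exact hlt.ne hsplit
    · rw [two_mul, ← hsplit]; gcongr

lemma exists_subset_two_pow_mul_le (hμ : Atomless μ) {s : Set Ω} (hs : MeasurableSet s)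
    (hs0 : 0 < μ s) (n : ℕ) : ∃ t ⊆ s, MeasurableSet t ∧ 0 < μ t ∧ 2 ^ n * μ t ≤ μ s := by
  induction n with
  | zero => exact ⟨s, subset_rfl, hs, hs0, by simp⟩
  | succ n ih =>
    obtain ⟨t, hts, ht, ht0, htn⟩ := ih
    obtain ⟨t', ht't, ht', ht'0, ht'2⟩ := hμ.exists_subset_two_mul_le ht ht0
    refine ⟨t', ht't.trans hts, ht', ht'0, ?_⟩
    calc 2 ^ (n + 1) * μ t' = 2 ^ n * (2 * μ t') := by ring
      _ ≤ 2 ^ n * μ t := by gcongr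
      _ ≤ μ s := htn

lemma exists_subset_pos_le (hμ : Atomless μ) {s : Set Ω} (hs : MeasurableSet s)
    (hs0 : 0 < μ s) (hs_top : μ s ≠ ∞) {ε : ℝ≥0∞} (hε : 0 < ε) :
    ∃ t ⊆ s, MeasurableSet t ∧ 0 < μ t ∧ μ t ≤ ε := by
  obtain ⟨n, hn⟩ := ENNReal.exists_nat_mul_gt hε.ne' hs_top
  obtain ⟨t, hts, ht, ht0, htn⟩ := hμ.exists_subset_two_pow_mul_le hs hs0 n
  refine ⟨t, hts, ht, ht0, le_of_not_gt fun hεt => hn.not_ge ?_⟩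
  calc (n : ℝ≥0∞) * ε ≤ 2 ^ n * ε := by gcongr; exact_mod_cast Nat.lt_two_pow_self.le
    _ ≤ 2 ^ n * μ t := by gcongr
    _ ≤ μ s := htn

end Atomless

def maxGain (μ : Measure Ω) (r : ℝ≥0∞) (A : Set Ω) : ℝ≥0∞ :=
  ⨆ (t : Set Ω) (_ : MeasurableSet t) (_ : Disjoint A t) (_ : μ (A ∪ t) ≤ r), μ t

lemma exists_superset_add_half_maxGain_le {μ : Measure Ω} {r : ℝ≥0∞} (hr : r ≠ ∞)
    {A : Set Ω} (hA : MeasurableSet A) (hAr : μ A ≤ r) :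
    ∃ B, A ⊆ B ∧ MeasurableSet B ∧ μ B ≤ r ∧ μ A + maxGain μ r A / 2 ≤ μ B := by
  rcases eq_or_ne (maxGain μ r A) 0 with h0 | h0
  · exact ⟨A, subset_rfl, hA, hAr, by simp [h0]⟩
  have hgain_le : maxGain μ r A ≤ r :=
    iSup₂_le fun t _ => iSup₂_le fun _ htr => (measure_mono subset_union_right).trans htr
  have hhalf : maxGain μ r A / 2 < maxGain μ r A :=
    ENNReal.half_lt_self h0 (ne_top_of_le_ne_top hr hgain_le)
  simp only [maxGain, lt_iSup_iff] at hhalf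
  obtain ⟨t, ht, hdisj, htr, hlt⟩ := hhalf
  refine ⟨A ∪ t, subset_union_left, hA.union ht, htr, ?_⟩
  rw [measure_union hdisj ht]
  gcongr
  exact hlt.le

lemma exists_succ_lt_add_of_forall_le {f : ℕ → ℝ≥0∞} {r c : ℝ≥0∞} (hf : ∀ n, f n ≤ r)
    (hr : r ≠ ∞) (hc : c ≠ 0) : ∃ n, f (n + 1) < f n + c := by
  by_contra! h
  have hgrowth (n : ℕ) : n * c ≤ f n := by
    induction n with
    | zero => simp
    | succ n ih =>
      calc ((n + 1 : ℕ) : ℝ≥0∞) * c = n * c + c := by push_cast; ring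
        _ ≤ f n + c := by gcongr
        _ ≤ f (n + 1) := h n
  obtain ⟨n, hn⟩ := ENNReal.exists_nat_mul_gt hc hr
  exact (hn.trans_le (hgrowth n)).not_ge (hf n)

/- Sierpiński's theorem, by greedy exhaustion: each step adds at least half of the largest gain
that keeps the measure below `r`. If the union fell short of `r`, a small set in the gap would be
an admissible gain at every step, so the measures would grow without bound. -/
theorem Atomless.exists_measure_eq {μ : Measure Ω} [IsFiniteMeasure μ] (hμ : Atomless μ)
    {r : ℝ≥0∞} (hr : r ≤ μ univ) : ∃ A, MeasurableSet A ∧ μ A = r := by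
  have hr_top : r ≠ ∞ := ne_top_of_le_ne_top (measure_ne_top μ univ) hr
  let S := {A : Set Ω // MeasurableSet A ∧ μ A ≤ r}
  have step (A : S) : ∃ B : S, A.1 ⊆ B.1 ∧ μ A.1 + maxGain μ r A.1 / 2 ≤ μ B.1 := by
    obtain ⟨B, hAB, hB, hBr, hgain⟩ := exists_superset_add_half_maxGain_le hr_top A.2.1 A.2.2
    exact ⟨⟨B, hB, hBr⟩, hAB, hgain⟩
  choose next hnext_sub hnext_gain using step
  let f : ℕ → S := fun n => next^[n] ⟨∅, .empty, by simp⟩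
  have hf_succ (n : ℕ) : f (n + 1) = next (f n) := Function.iterate_succ_apply' ..
  have hmono : Monotone fun n => (f n).1 :=
    monotone_nat_of_le_succ fun n => hf_succ n ▸ hnext_sub (f n)
  set A := ⋃ n, (f n).1
  have hA : MeasurableSet A := .iUnion fun n => (f n).2.1
  have hAr : μ A ≤ r := by
    rw [hmono.measure_iUnion]
    exact iSup_le fun n => (f n).2.2
  refine ⟨A, hA, hAr.antisymm (not_lt.mp fun hlt => ?_)⟩
  have hAc : 0 < μ Aᶜ := by
    rw [measure_compl hA (measure_ne_top μ A)]
    exact tsub_pos_of_lt (hlt.trans_le hr)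
  obtain ⟨t, htA, ht, ht0, htr⟩ :=
    hμ.exists_subset_pos_le hA.compl hAc (measure_ne_top μ _) (tsub_pos_of_lt hlt)
  have hgain (n : ℕ) : μ t ≤ maxGain μ r (f n).1 := by
    have hfA : (f n).1 ⊆ A := subset_iUnion (fun n => (f n).1) n
    refine le_iSup₂_of_le t ht (le_iSup₂_of_le ?_ ?_ le_rfl)
    · exact disjoint_of_subset_left hfA (subset_compl_iff_disjoint_left.mp htA)
    · calc μ ((f n).1 ∪ t) ≤ μ (A ∪ t) := measure_mono (union_subset_union_left t hfA)
        _ ≤ μ A + (r - μ A) := (measure_union_le A t).trans (by gcongr)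
        _ = r := add_tsub_cancel_of_le hAr
  obtain ⟨n, hn⟩ := exists_succ_lt_add_of_forall_le (fun n => (f n).2.2) hr_top
    (ENNReal.half_pos ht0.ne').ne'
  refine hn.not_ge ?_
  calc μ (f n).1 + μ t / 2 ≤ μ (f n).1 + maxGain μ r (f n).1 / 2 := by gcongr; exact hgain n
    _ ≤ μ (f (n + 1)).1 := hf_succ n ▸ hnext_gain (f n)

section Utility

variable {u v : ℝ → ℝ}

lemma IsUtility.differentiable (hu : IsUtility univ u) : Differentiable ℝ u :=
  fun x => hu.1 x trivial

lemma IsUtility.continuous (hu : IsUtility univ u) : Continuous u :=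
  hu.differentiable.continuous

lemma IsUtility.strictMono (hu : IsUtility univ u) : StrictMono u :=
  strictMono_of_deriv_pos fun x => hu.2.2 x trivial

lemma IsUtility.concaveOn_iff (hu : IsUtility univ u) :
    ConcaveOn ℝ univ u ↔ ∀ x, deriv (deriv u) x ≤ 0 := by
  refine ⟨fun hc x => Antitone.deriv_nonpos fun a b hab =>
    hc.antitoneOn_deriv (fun y _ => hu.1 y trivial) trivial trivial hab, fun h => ?_⟩
  exact concaveOn_univ_of_deriv2_nonpos hu.differentiable (fun x => hu.2.1 x trivial)
    fun x => by simpa only [Function.iterate_succ, Function.iterate_zero, Function.comp_apply,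
      id] using h x

lemma IsUtility.concaveOn_iff_RA_nonneg (hu : IsUtility univ u) :
    ConcaveOn ℝ univ u ↔ ∀ x, 0 ≤ RA u x := by
  simp only [hu.concaveOn_iff, RA, le_div_iff₀ (hu.2.2 _ trivial), zero_mul, neg_nonneg]

lemma IsUtility.concaveOn_of_RA_le (hv : IsUtility univ v) (hvc : ConcaveOn ℝ univ v)
    (hu : IsUtility univ u) (hRA : ∀ x ∈ univ, RA v x ≤ RA u x) : ConcaveOn ℝ univ u :=
  hu.concaveOn_iff_RA_nonneg.mpr fun x =>
    (hv.concaveOn_iff_RA_nonneg.mp hvc x).trans (hRA x trivial)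

lemma exists_lt_midpoint_of_deriv_deriv_pos {f : ℝ → ℝ} (hf : Differentiable ℝ f) {x₀ : ℝ}
    (h : 0 < deriv (deriv f) x₀) : ∃ s > 0, 2 * f x₀ < f (x₀ - s) + f (x₀ + s) := by
  have hslope : ∀ᶠ y in 𝓝[≠] x₀, 0 < slope (deriv f) x₀ y :=
    (hasDerivAt_iff_tendsto_slope.mp (differentiableAt_of_deriv_ne_zero h.ne').hasDerivAt
      |>.eventually (eventually_gt_nhds h))
  obtain ⟨δ, hδ, hball⟩ := Metric.mem_nhdsWithin_iff.mp hslope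
  have hslope_pos {y : ℝ} (hy : |y - x₀| < δ) (hne : y ≠ x₀) : 0 < slope (deriv f) x₀ y :=
    hball ⟨by rwa [Metric.mem_ball, Real.dist_eq], hne⟩
  refine ⟨δ / 2, by positivity, ?_⟩
  obtain ⟨c, hc, hc_eq⟩ := exists_deriv_eq_slope' f (by linarith : x₀ < x₀ + δ / 2)
    hf.continuous.continuousOn fun x _ => (hf x).differentiableWithinAt
  obtain ⟨c', hc', hc'_eq⟩ := exists_deriv_eq_slope' f (by linarith : x₀ - δ / 2 < x₀)
    hf.continuous.continuousOn fun x _ => (hf x).differentiableWithinAt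
  have hright : deriv f x₀ < deriv f c := (slope_pos_iff hc.1).mp <|
    hslope_pos (by rw [abs_lt]; constructor <;> linarith [hc.1, hc.2]) hc.1.ne'
  have hleft : deriv f c' < deriv f x₀ := (slope_pos_iff_gt hc'.2).mp <|
    hslope_pos (by rw [abs_lt]; constructor <;> linarith [hc'.1, hc'.2]) hc'.2.ne
  have key : slope f (x₀ - δ / 2) x₀ < slope f x₀ (x₀ + δ / 2) := by
    rw [← hc_eq, ← hc'_eq]; linarith
  rw [slope_def_field, slope_def_field, sub_sub_cancel, add_sub_cancel_left,
    div_lt_div_iff_of_pos_right (by positivity)] at key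
  linarith

end Utility

section RandomVariables

variable {P : Measure Ω} {X Y : Ω → ℝ}

lemma memX_const (c : ℝ) : MemX P fun _ => c :=
  ⟨measurable_const, |c|, ae_of_all _ fun _ => le_rfl⟩

open scoped Classical in
lemma memX_ite {A : Set Ω} (hA : MeasurableSet A) (a b : ℝ) :
    MemX P fun ω => if ω ∈ A then a else b :=
  ⟨measurable_const.ite hA measurable_const, max |a| |b|,
    ae_of_all _ fun ω => by dsimp only; split_ifs <;> simp⟩

lemma MemX.add (hX : MemX P X) (hY : MemX P Y) : MemX P fun ω => X ω + Y ω := by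
  obtain ⟨hXm, CX, hCX⟩ := hX
  obtain ⟨hYm, CY, hCY⟩ := hY
  refine ⟨hXm.add hYm, CX + CY, ?_⟩
  filter_upwards [hCX, hCY] with ω hX hY
  exact (abs_add_le _ _).trans (add_le_add hX hY)

lemma MemX.const_mul (hX : MemX P X) (c : ℝ) : MemX P fun ω => c * X ω := by
  obtain ⟨hXm, C, hC⟩ := hX
  refine ⟨hXm.const_mul c, |c| * C, ?_⟩
  filter_upwards [hC] with ω h
  rw [abs_mul]
  exact mul_le_mul_of_nonneg_left h (abs_nonneg c)

lemma MemX.integrable_comp [IsFiniteMeasure P] (hX : MemX P X) {u : ℝ → ℝ}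
    (hu : Continuous u) : Integrable (fun ω => u (X ω)) P := by
  obtain ⟨hXm, C, hC⟩ := hX
  obtain ⟨D, hD⟩ := (isCompact_Icc (a := -C) (b := C)).exists_bound_of_continuousOn hu.continuousOn
  refine .of_bound (hu.measurable.comp hXm).aestronglyMeasurable D ?_
  filter_upwards [hC] with ω h
  exact hD _ (abs_le.mp h)

open scoped Classical in
lemma integral_comp_ite_of_measure_eq_half [IsProbabilityMeasure P] {A : Set Ω}
    (hA : MeasurableSet A) (hA_half : P A = 1 / 2) (g : ℝ → ℝ) (a b : ℝ) :
    ∫ ω, g (if ω ∈ A then a else b) ∂P = (g a + g b) / 2 := by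
  have hAc : P Aᶜ = 1 / 2 := by
    rw [prob_compl_eq_one_sub hA, hA_half, one_div, ENNReal.one_sub_inv_two]
  simp only [apply_ite g]
  change ∫ ω, A.piecewise (fun _ => g a) (fun _ => g b) ω ∂P = _
  rw [integral_piecewise hA integrableOn_const integrableOn_const,
    setIntegral_const, setIntegral_const, measureReal_def, measureReal_def, hA_half, hAc]
  simp only [one_div, ENNReal.toReal_inv, ENNReal.toReal_ofNat, smul_eq_mul]
  ring

end RandomVariables

section StochasticDominance

variable {P : Measure Ω} {v : ℝ → ℝ} {X Y Z W : Ω → ℝ}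

lemma vSD_of_ae_le (h : ∀ᵐ ω ∂P, X ω ≤ Y ω) : vSD P univ v X Y := fun _ hu _ hiX hiY =>
  integral_mono_ae hiX hiY (h.mono fun _ hω => hu.strictMono.monotone hω)

lemma vSD_refl : vSD P univ v X X := vSD_of_ae_le (ae_of_all _ fun _ => le_rfl)

lemma vSD.trans [IsFiniteMeasure P] (hXY : vSD P univ v X Y) (hYW : vSD P univ v Y W)
    (hY : MemX P Y) : vSD P univ v X W := fun u hu hRA hiX hiW =>
  have hiY := hY.integrable_comp hu.continuous
  (hXY u hu hRA hiX hiY).trans (hYW u hu hRA hiY hiW)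

lemma integral_comp_le_of_vSD (hv : IsUtility univ v) (h : vSD P univ v X Y)
    (hiX : Integrable (fun ω => v (X ω)) P) (hiY : Integrable (fun ω => v (Y ω)) P) :
    ∫ ω, v (X ω) ∂P ≤ ∫ ω, v (Y ω) ∂P :=
  h v hv (fun _ _ => le_rfl) hiX hiY

lemma le_of_vSD_const [IsProbabilityMeasure P] (hv : IsUtility univ v) {a b : ℝ}
    (h : vSD P univ v (fun _ => a) (fun _ => b)) : a ≤ b :=
  hv.strictMono.le_iff_le.mp <| by
    simpa using integral_comp_le_of_vSD hv h (integrable_const _) (integrable_const _)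

lemma vSD.convex_comb [IsFiniteMeasure P] (hv : IsUtility univ v) (hvc : ConcaveOn ℝ univ v)
    (hX : MemX P X) (hY : MemX P Y) (hZX : vSD P univ v Z X) (hZY : vSD P univ v Z Y)
    {l : ℝ} (hl0 : 0 ≤ l) (hl1 : l ≤ 1) :
    vSD P univ v Z fun ω => l * X ω + (1 - l) * Y ω := by
  intro u hu hRA hiZ hiXY
  have huc := hv.concaveOn_of_RA_le hvc hu hRA
  have hiX := hX.integrable_comp hu.continuous
  have hiY := hY.integrable_comp hu.continuous
  have hl1' : 0 ≤ 1 - l := sub_nonneg.mpr hl1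
  calc ∫ ω, u (Z ω) ∂P = l * ∫ ω, u (Z ω) ∂P + (1 - l) * ∫ ω, u (Z ω) ∂P := by ring
    _ ≤ l * ∫ ω, u (X ω) ∂P + (1 - l) * ∫ ω, u (Y ω) ∂P := by
      gcongr l * ?_ + (1 - l) * ?_
      exacts [hZX u hu hRA hiZ hiX, hZY u hu hRA hiZ hiY]
    _ = ∫ ω, (l * u (X ω) + (1 - l) * u (Y ω)) ∂P := by
      rw [integral_add (hiX.const_mul l) (hiY.const_mul _), integral_const_mul,
        integral_const_mul]
    _ ≤ ∫ ω, u (l * X ω + (1 - l) * Y ω) ∂P :=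
      integral_mono ((hiX.const_mul l).add (hiY.const_mul _)) hiXY fun ω =>
        huc.2 trivial trivial hl0 hl1' (add_sub_cancel l 1)

end StochasticDominance

section BaseRiskMeasure

variable {P : Measure Ω} {v : ℝ → ℝ} {X Y Z : Ω → ℝ}

lemma nonempty_setOf_vSD_add (hZ : MemX P Z) (hX : MemX P X) :
    {m : ℝ | vSD P univ v Z (fun ω => X ω + m)}.Nonempty := by
  obtain ⟨-, CZ, hCZ⟩ := hZ
  obtain ⟨-, CX, hCX⟩ := hX
  refine ⟨CZ + CX, vSD_of_ae_le ?_⟩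
  filter_upwards [hCZ, hCX] with ω hZω hXω
  linarith [(abs_le.mp hZω).2, (abs_le.mp hXω).1]

lemma le_baseRM (hZ : MemX P Z) (hX : MemX P X) {a : ℝ}
    (h : ∀ m, vSD P univ v Z (fun ω => X ω + m) → a ≤ m) : a ≤ baseRM P v Z X :=
  le_csInf (nonempty_setOf_vSD_add hZ hX) h

variable [IsProbabilityMeasure P]

lemma bddBelow_setOf_vSD_add (hv : IsUtility univ v) (hZ : MemX P Z) (hX : MemX P X) :
    BddBelow {m : ℝ | vSD P univ v Z (fun ω => X ω + m)} := by
  obtain ⟨CZ, hCZ⟩ := hZ.2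
  obtain ⟨CX, hCX⟩ := hX.2
  refine ⟨-CZ - CX, fun m hm => ?_⟩
  have hlow : vSD P univ v (fun _ => -CZ) Z :=
    vSD_of_ae_le (hCZ.mono fun ω h => (abs_le.mp h).1)
  have hup : vSD P univ v (fun ω => X ω + m) (fun _ => CX + m) :=
    vSD_of_ae_le (hCX.mono fun ω h => by linarith [(abs_le.mp h).2])
  have := le_of_vSD_const hv ((hlow.trans hm hZ).trans hup (hX.add (memX_const m)))
  linarith

lemma baseRM_le (hv : IsUtility univ v) (hZ : MemX P Z) (hX : MemX P X) {m : ℝ}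
    (hm : vSD P univ v Z fun ω => X ω + m) : baseRM P v Z X ≤ m :=
  csInf_le (bddBelow_setOf_vSD_add hv hZ hX) hm

lemma baseRM_antitone (hv : IsUtility univ v) (hZ : MemX P Z) (hX : MemX P X)
    (hY : MemX P Y) (hXY : ∀ᵐ ω ∂P, X ω ≤ Y ω) : baseRM P v Z Y ≤ baseRM P v Z X :=
  le_baseRM hZ hX fun m hm => baseRM_le hv hZ hY <|
    hm.trans (vSD_of_ae_le (hXY.mono fun _ h => by linarith)) (hX.add (memX_const m))

lemma baseRM_add_const_le (hv : IsUtility univ v) (hZ : MemX P Z) (hX : MemX P X) (c : ℝ) :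
    baseRM P v Z (fun ω => X ω + c) ≤ baseRM P v Z X - c := by
  refine le_sub_iff_add_le.mpr (le_baseRM hZ hX fun m hm => ?_)
  refine le_sub_iff_add_le.mp (baseRM_le hv hZ (hX.add (memX_const c)) ?_)
  simpa only [add_add_sub_cancel] using hm

lemma baseRM_add_const (hv : IsUtility univ v) (hZ : MemX P Z) (hX : MemX P X) (c : ℝ) :
    baseRM P v Z (fun ω => X ω + c) = baseRM P v Z X - c := by
  refine (baseRM_add_const_le hv hZ hX c).antisymm ?_
  have := baseRM_add_const_le hv hZ (hX.add (memX_const c)) (-c)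
  simp only [add_neg_cancel_right] at this
  linarith

lemma baseRM_isRiskMeasure (hv : IsUtility univ v) (hZ : MemX P Z) :
    IsRiskMeasure P (baseRM P v Z) :=
  ⟨fun _ _ hX hY hXY => baseRM_antitone hv hZ hX hY hXY,
    fun _ hX c => baseRM_add_const hv hZ hX c⟩

lemma baseRM_convex_comb_le (hv : IsUtility univ v) (hvc : ConcaveOn ℝ univ v)
    (hZ : MemX P Z) (hX : MemX P X) (hY : MemX P Y) {l : ℝ} (hl0 : 0 ≤ l) (hl1 : l ≤ 1) :
    baseRM P v Z (fun ω => l * X ω + (1 - l) * Y ω) ≤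
      l * baseRM P v Z X + (1 - l) * baseRM P v Z Y := by
  set SX := {m : ℝ | vSD P univ v Z (fun ω => X ω + m)}
  set SY := {m : ℝ | vSD P univ v Z (fun ω => Y ω + m)}
  have hl1' : 0 ≤ 1 - l := sub_nonneg.mpr hl1
  have hsub : l • SX + (1 - l) • SY ⊆
      {m : ℝ | vSD P univ v Z (fun ω => (l * X ω + (1 - l) * Y ω) + m)} := by
    rintro _ ⟨_, ⟨mX, hmX, rfl⟩, _, ⟨mY, hmY, rfl⟩, rfl⟩
    show vSD P univ v Z fun ω => (l * X ω + (1 - l) * Y ω) + (l * mX + (1 - l) * mY)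
    convert vSD.convex_comb hv hvc (hX.add (memX_const mX)) (hY.add (memX_const mY)) hmX hmY
      hl0 hl1 using 2
    ring
  calc baseRM P v Z (fun ω => l * X ω + (1 - l) * Y ω) ≤ sInf (l • SX + (1 - l) • SY) :=
        csInf_le_csInf (bddBelow_setOf_vSD_add hv hZ ((hX.const_mul l).add (hY.const_mul _)))
          ((nonempty_setOf_vSD_add hZ hX).smul_set.add (nonempty_setOf_vSD_add hZ hY).smul_set)
          hsub
    _ = l * baseRM P v Z X + (1 - l) * baseRM P v Z Y := by
      rw [csInf_add (nonempty_setOf_vSD_add hZ hX).smul_set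
        ((bddBelow_setOf_vSD_add hv hZ hX).smul_of_nonneg hl0)
        (nonempty_setOf_vSD_add hZ hY).smul_set
        ((bddBelow_setOf_vSD_add hv hZ hY).smul_of_nonneg hl1'),
        Real.sInf_smul_of_nonneg hl0, Real.sInf_smul_of_nonneg hl1']
      rfl

lemma baseRM_nonpos_of_vSD (hv : IsUtility univ v) (hZ : MemX P Z) (hX : MemX P X)
    (h : vSD P univ v Z X) : baseRM P v Z X ≤ 0 :=
  baseRM_le hv hZ hX (by simpa only [add_zero] using h)

lemma baseRM_const_pos (hv : IsUtility univ v) (hZ : MemX P Z) {c : ℝ}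
    (h : v c < ∫ ω, v (Z ω) ∂P) : 0 < baseRM P v Z fun _ => c := by
  have hnear : ∀ᶠ ε in 𝓝[>] 0, v (c + ε) < ∫ ω, v (Z ω) ∂P :=
    nhdsWithin_le_nhds <| ((hv.continuous.comp (continuous_const_add c)).tendsto' 0 _
      (by simp)).eventually (eventually_lt_nhds h)
  obtain ⟨ε, hvε, hε⟩ := (hnear.and self_mem_nhdsWithin).exists
  refine hε.trans_le (le_baseRM hZ (memX_const c) fun m hm => ?_)
  have := integral_comp_le_of_vSD hv hm (hZ.integrable_comp hv.continuous) (integrable_const _)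
  simp only [integral_const, probReal_univ, one_smul] at this
  exact ((add_lt_add_iff_left c).mp (hv.strictMono.lt_iff_lt.mp (hvε.trans_le this))).le

end BaseRiskMeasure

open scoped Classical in
lemma concaveOn_of_forall_baseRM_convex {P : Measure Ω} [IsProbabilityMeasure P]
    (hP : Atomless P) {v : ℝ → ℝ} (hv : IsUtility univ v)
    (hconv : ∀ Z : Ω → ℝ, MemX P Z → ∀ X Y : Ω → ℝ, MemX P X → MemX P Y →
      ∀ l : ℝ, 0 ≤ l → l ≤ 1 →
        baseRM P v Z (fun ω => l * X ω + (1 - l) * Y ω) ≤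
          l * baseRM P v Z X + (1 - l) * baseRM P v Z Y) :
    ConcaveOn ℝ univ v := by
  by_contra hnc
  obtain ⟨x₀, hx₀⟩ : ∃ x₀, 0 < deriv (deriv v) x₀ := by
    simpa only [hv.concaveOn_iff, not_forall, not_le] using hnc
  obtain ⟨s, -, hmid⟩ := exists_lt_midpoint_of_deriv_deriv_pos hv.differentiable hx₀
  obtain ⟨A, hA, hA_half⟩ := hP.exists_measure_eq (r := 1 / 2) (by simp)
  set Z : Ω → ℝ := fun ω => if ω ∈ A then x₀ - s else x₀ + s
  set X : Ω → ℝ := fun ω => if ω ∈ A then x₀ + s else x₀ - s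
  have hZ : MemX P Z := memX_ite hA _ _
  have hX : MemX P X := memX_ite hA _ _
  have hZX : vSD P univ v Z X := fun u _ _ _ _ => by
    simp only [Z, X, integral_comp_ite_of_measure_eq_half hA hA_half, add_comm, le_refl]
  have hmix : (fun ω => 1 / 2 * X ω + (1 - 1 / 2) * Z ω) = fun _ => x₀ := by
    funext ω
    simp only [X, Z]
    split_ifs <;> ring
  have hpos : 0 < baseRM P v Z fun _ => x₀ := baseRM_const_pos hv hZ <| by
    rw [integral_comp_ite_of_measure_eq_half hA hA_half]
    linarith
  have := hconv Z hZ X Z hX hZ (1 / 2) (by norm_num) (by norm_num)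
  rw [hmix] at this
  linarith [baseRM_nonpos_of_vSD hv hZ hX hZX, baseRM_nonpos_of_vSD hv hZ hZ vSD_refl]

/-- For a threshold utility `v ∈ 𝒰(ℝ)` and any `Z ∈ 𝒳`, the base
risk measure `ρ_{Z,v}(X) = inf {m : Z ≤_{v-SD} X + m}` is finite-valued on `𝒳` and
is a monetary risk measure; moreover, every base risk measure under `v` is convex
iff `v` is concave. -/
theorem statement8 (P : Measure Ω) [IsProbabilityMeasure P] (hP : Atomless P)
    (v : ℝ → ℝ) (hv : IsUtility Set.univ v) :
    (∀ Z X : Ω → ℝ, MemX P Z → MemX P X →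
      ({m : ℝ | vSD P Set.univ v Z (fun ω => X ω + m)}.Nonempty ∧
        BddBelow {m : ℝ | vSD P Set.univ v Z (fun ω => X ω + m)})) ∧
    (∀ Z : Ω → ℝ, MemX P Z → IsRiskMeasure P (baseRM P v Z)) ∧
    ((∀ Z : Ω → ℝ, MemX P Z → ∀ X Y : Ω → ℝ, MemX P X → MemX P Y →
        ∀ l : ℝ, 0 ≤ l → l ≤ 1 →
        baseRM P v Z (fun ω => l * X ω + (1 - l) * Y ω) ≤
          l * baseRM P v Z X + (1 - l) * baseRM P v Z Y) ↔
      ConcaveOn ℝ Set.univ v) :=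
  ⟨fun _ _ hZ hX => ⟨nonempty_setOf_vSD_add hZ hX, bddBelow_setOf_vSD_add hv hZ hX⟩,
    fun _ hZ => baseRM_isRiskMeasure hv hZ,
    concaveOn_of_forall_baseRM_convex hP hv,
    fun hvc _ hZ _ _ hX hY _ hl0 hl1 => baseRM_convex_comb_le hv hvc hZ hX hY hl0 hl1⟩

end Paper
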